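/- Let M be a maximal ancestral graph (MAG) and let X, Y be disjoint node sets. Then the proper back-door graph M^pbd_XY, obtained from M by removing every edge X→D with X∈X and D∈PCP(X,Y), is also a MAG. -/

import Mathlib

/-!
Common definitions: mixed graphs, walks, colliders, m-separation,
ancestral graphs, DAGs, MAGs, proper causal paths, adjustment criteria,
inducing paths, and MAG marginalization.
-/

universe u

/-- The four possible kinds of edges of a mixed graph, oriented along the
direction of traversal: `u → v`, `u ← v`, `u ↔ v`, `u − v`. -/
inductive EType where
  | right : EType
  | left : EType
  | both : EType
  | undirEdge : EType
deriving DecidableEq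

namespace EType

/-- The edge has an arrowhead at its first endpoint. -/
def headFst : EType → Prop
  | .left => True
  | .both => True
  | _ => False

/-- The edge has an arrowhead at its second endpoint. -/
def headSnd : EType → Prop
  | .right => True
  | .both => True
  | _ => False

end EType

/-- A mixed graph with directed, bidirected and undirected edges. -/
structure MixedGraph (V : Type u) where
  dir : V → V → Prop
  bi : V → V → Prop
  undir : V → V → Prop
  bi_symm : ∀ u v, bi u v → bi v u
  undir_symm : ∀ u v, undir u v → undir v u

namespace MixedGraph

variable {V : Type u}

/-- `G.IsEdge e u v` holds if the graph contains the edge `e` from `u` to `v`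
(read in the direction of traversal). -/
def IsEdge (G : MixedGraph V) : EType → V → V → Prop
  | .right, u, v => G.dir u v
  | .left, u, v => G.dir v u
  | .both, u, v => G.bi u v
  | .undirEdge, u, v => G.undir u v

/-- Walks in a mixed graph, remembering the type of every traversed edge. -/
inductive Walk (G : MixedGraph V) : V → V → Type u
  | nil (v : V) : Walk G v v
  | cons (u v w : V) (e : EType) (h : G.IsEdge e u v) (p : Walk G v w) : Walk G u w

namespace Walk

variable {G : MixedGraph V}

/-- The list of nodes visited by a walk (with multiplicity). -/
def support : {a b : V} → G.Walk a b → List V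
  | _, _, .nil v => [v]
  | _, _, .cons u _ _ _ _ p => u :: p.support

/-- A path is a walk without repeated nodes. -/
def IsPath {a b : V} (p : G.Walk a b) : Prop := p.support.Nodup

/-- Auxiliary m-connectivity check: `ph` records whether the previous edge of
the walk has an arrowhead at the current start node.  At every interior node,
the node must be a collider (two arrowheads meet) iff it belongs to `Z`. -/
def connFrom (Z : Set V) : Prop → {a b : V} → G.Walk a b → Prop
  | _, _, _, .nil _ => True
  | ph, _, _, .cons u _ _ e _ p =>
      ((ph ∧ e.headFst) ↔ u ∈ Z) ∧ p.connFrom Z e.headSnd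

/-- The walk m-connects its endpoints given `Z`: all colliders and only
colliders on it are in `Z`. -/
def ConnBy (Z : Set V) : {a b : V} → G.Walk a b → Prop
  | _, _, .nil _ => True
  | _, _, .cons _ _ _ e _ p => p.connFrom Z e.headSnd

/-- A causal (directed) walk: every edge points towards the end node. -/
def IsCausal : {a b : V} → G.Walk a b → Prop
  | _, _, .nil _ => True
  | _, _, .cons _ _ _ e _ p => e = EType.right ∧ p.IsCausal

/-- A walk is proper w.r.t. `X` if only its start node may belong to `X`. -/
def ProperFrom (X : Set V) : {a b : V} → G.Walk a b → Prop
  | _, _, .nil _ => True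
  | _, _, .cons _ _ _ _ _ p => ∀ n ∈ p.support, n ∉ X

/-- Concatenation of walks. -/
def append : {a b c : V} → G.Walk a b → G.Walk b c → G.Walk a c
  | _, _, _, .nil _, q => q
  | _, _, _, .cons u v _ e h p, q => .cons u v _ e h (p.append q)

/-- The walk is nonempty and its first edge has an arrowhead at the start
node. -/
def headAtStart : {a b : V} → G.Walk a b → Prop
  | _, _, .nil _ => False
  | _, _, .cons _ _ _ e _ _ => e.headFst

/-- The walk is nonempty and its last edge has an arrowhead at the end node. -/
def headAtEnd : {a b : V} → G.Walk a b → Prop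
  | _, _, .nil _ => False
  | _, _, .cons _ _ _ e _ (.nil _) => e.headSnd
  | _, _, .cons _ _ _ _ _ p => p.headAtEnd

/-- `P` holds of every (ordered) pair of consecutive nodes of the walk. -/
def edgeProp (P : V → V → Prop) : {a b : V} → G.Walk a b → Prop
  | _, _, .nil _ => True
  | _, _, .cons u v _ _ _ p => P u v ∧ p.edgeProp P

end Walk

/-- `x` and `y` are m-connected given `Z`: there is a walk between them on
which all colliders and only colliders are in `Z`. -/
def MConn (G : MixedGraph V) (Z : Set V) (x y : V) : Prop :=
  ∃ p : G.Walk x y, p.ConnBy Z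

/-- `Z` m-separates the node sets `X` and `Y`. -/
def MSep (G : MixedGraph V) (X Y Z : Set V) : Prop :=
  ∀ x ∈ X, ∀ y ∈ Y, ¬ G.MConn Z x y

/-- `Z` is an m-separator relative to `(X, Y)`: it is disjoint from `X ∪ Y`
and m-separates `X` and `Y`. -/
def IsMSep (G : MixedGraph V) (X Y Z : Set V) : Prop :=
  Disjoint Z (X ∪ Y) ∧ G.MSep X Y Z

/-- An `M`-minimal m-separator relative to `(X, Y)`. -/
def IsMinMSep (G : MixedGraph V) (X Y M Z : Set V) : Prop :=
  G.IsMSep X Y Z ∧ M ⊆ Z ∧ ∀ Z', Z' ⊂ Z → M ⊆ Z' → ¬ G.IsMSep X Y Z'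

/-- One step of the anterior relation: a directed or undirected edge. -/
def antEdge (G : MixedGraph V) (u v : V) : Prop := G.dir u v ∨ G.undir u v

/-- `u` is an anterior of `v` (every node is its own anterior). -/
def Anterior (G : MixedGraph V) (u v : V) : Prop :=
  Relation.ReflTransGen G.antEdge u v

/-- The set of anteriors of nodes of `W`. -/
def Ant (G : MixedGraph V) (W : Set V) : Set V := {u | ∃ w ∈ W, G.Anterior u w}

/-- `v` is a descendant of `u`, i.e. there is a directed path `u → ⋯ → v`
(every node is its own descendant/ancestor). -/
def Anc (G : MixedGraph V) (u v : V) : Prop := Relation.ReflTransGen G.dir u v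

/-- The set of descendants of nodes of `W`. -/
def De (G : MixedGraph V) (W : Set V) : Set V := {v | ∃ w ∈ W, G.Anc w v}

/-- The set of ancestors of nodes of `W`. -/
def AnSet (G : MixedGraph V) (W : Set V) : Set V := {v | ∃ w ∈ W, G.Anc v w}

/-- An ancestral graph: (1) for each edge `a ← b` or `a ↔ b`, `a` is not an
anterior of `b`; (2) for each edge `a − b` there is no edge `a ← c`, `a ↔ c`,
`b ← c` or `b ↔ c`. -/
def IsAG (G : MixedGraph V) : Prop :=
  (∀ a b, G.dir b a ∨ G.bi a b → ¬ G.Anterior a b) ∧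
  (∀ a b, G.undir a b →
    ∀ c, ¬ G.dir c a ∧ ¬ G.bi a c ∧ ¬ G.dir c b ∧ ¬ G.bi b c)

/-- A DAG: only directed edges, and no directed cycles. -/
def IsDAG (G : MixedGraph V) : Prop :=
  (∀ u v, ¬ G.bi u v) ∧ (∀ u v, ¬ G.undir u v) ∧
  (∀ v, ¬ Relation.TransGen G.dir v v)

/-- Two nodes are adjacent if they are joined by some edge. -/
def Adjacent (G : MixedGraph V) (u v : V) : Prop :=
  G.dir u v ∨ G.dir v u ∨ G.bi u v ∨ G.undir u v

/-- A maximal ancestral graph (MAG): only directed and bidirected edges, no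
directed cycle, no almost-directed cycle, and every pair of non-adjacent
nodes can be m-separated by some set of the remaining nodes. -/
def IsMAG (G : MixedGraph V) : Prop :=
  (∀ u v, ¬ G.undir u v) ∧
  (∀ v, ¬ Relation.TransGen G.dir v v) ∧
  (∀ u v, G.bi u v → ¬ Relation.TransGen G.dir v u) ∧
  (∀ u v, u ≠ v → ¬ G.Adjacent u v →
    ∃ Z : Set V, u ∉ Z ∧ v ∉ Z ∧ ¬ G.MConn Z u v)

/-- `PCP G X Y`: the set of nodes, excluding nodes of `X`, that lie on a
proper causal path from `X` to `Y`. -/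
def PCP (G : MixedGraph V) (X Y : Set V) : Set V :=
  {w | w ∉ X ∧ ∃ x ∈ X, ∃ y ∈ Y, ∃ p : G.Walk x y,
    p.IsPath ∧ p.IsCausal ∧ p.ProperFrom X ∧ w ∈ p.support}

/-- `Dpcp G X Y`: the descendants of nodes on proper causal paths. -/
def Dpcp (G : MixedGraph V) (X Y : Set V) : Set V := G.De (G.PCP X Y)

/-- Remove from `G` all edges into `A` and all edges out of `B`. -/
def rmInOut (G : MixedGraph V) (A B : Set V) : MixedGraph V where
  dir u v := G.dir u v ∧ v ∉ A ∧ u ∉ B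
  bi u v := G.bi u v ∧ u ∉ A ∧ v ∉ A
  undir u v := G.undir u v ∧ u ∉ B ∧ v ∉ B
  bi_symm := fun u v h => ⟨G.bi_symm u v h.1, h.2.2, h.2.1⟩
  undir_symm := fun u v h => ⟨G.undir_symm u v h.1, h.2.2, h.2.1⟩

/-- The parametrized proper back-door graph: remove every edge `x → d` with
`x ∈ X` and `d ∈ PCP(X,Y) ∪ C`. -/
def pbdC (G : MixedGraph V) (X Y C : Set V) : MixedGraph V where
  dir u v := G.dir u v ∧ ¬(u ∈ X ∧ v ∈ G.PCP X Y ∪ C)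
  bi := G.bi
  undir := G.undir
  bi_symm := G.bi_symm
  undir_symm := G.undir_symm

/-- The proper back-door graph. -/
def pbd (G : MixedGraph V) (X Y : Set V) : MixedGraph V := G.pbdC X Y ∅

/-- The adjustment criterion (AC) in a DAG: (a) no element of `Z` is a
descendant in `G_{X̄}` of a node outside `X` lying on a proper causal path
from `X` to `Y`; (b) every proper non-causal path from `X` to `Y` is blocked
by `Z`. -/
def SatisfiesACdag (G : MixedGraph V) (X Y Z : Set V) : Prop :=
  (∀ z ∈ Z, z ∉ (G.rmInOut X ∅).De (G.PCP X Y)) ∧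
  (∀ x ∈ X, ∀ y ∈ Y, ∀ p : G.Walk x y,
    p.IsPath → p.ProperFrom X → ¬ p.IsCausal → ¬ p.ConnBy Z)

/-- The adjustment criterion (AC) in a MAG: (a) no element of `Z` is a
descendant in `M` of a node outside `X` lying on a proper causal path from
`X` to `Y`; (b) every proper non-causal path from `X` to `Y` is blocked by
`Z`. -/
def SatisfiesACmag (G : MixedGraph V) (X Y Z : Set V) : Prop :=
  (∀ z ∈ Z, z ∉ G.Dpcp X Y) ∧
  (∀ x ∈ X, ∀ y ∈ Y, ∀ p : G.Walk x y,
    p.IsPath → p.ProperFrom X → ¬ p.IsCausal → ¬ p.ConnBy Z)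

/-- The constructive back-door criterion (CBC): (a) `Z` avoids
`Dpcp(X,Y)`; (b) `Z` m-separates `X` and `Y` in the proper back-door
graph. -/
def SatisfiesCBC (G : MixedGraph V) (X Y Z : Set V) : Prop :=
  (∀ z ∈ Z, z ∉ G.Dpcp X Y) ∧ (G.pbd X Y).MSep X Y Z

/-- The parametrized constructive back-door criterion CBC(A,B,C). -/
def SatisfiesCBCP (G : MixedGraph V) (X Y Z A B C : Set V) : Prop :=
  (∀ z ∈ Z, z ∉ (G.rmInOut A B).De (G.PCP X Y)) ∧ (G.pbdC X Y C).MSep X Y Z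

namespace Walk

variable {G : MixedGraph V}

/-- Auxiliary check for inducing paths: every interior non-collider is in
`L`, and every interior collider is an ancestor of a node of `T`.  `ph`
records whether the previous edge has an arrowhead at the current node. -/
def indFrom (L T : Set V) : Prop → {a b : V} → G.Walk a b → Prop
  | _, _, _, .nil _ => True
  | ph, _, _, .cons u _ _ e _ p =>
      ((ph ∧ e.headFst) → ∃ t ∈ T, Relation.ReflTransGen G.dir u t) ∧
      (¬(ph ∧ e.headFst) → u ∈ L) ∧ p.indFrom L T e.headSnd

/-- Interior conditions for inducing paths (endpoints are exempt). -/
def indBody (L T : Set V) : {a b : V} → G.Walk a b → Prop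
  | _, _, .nil _ => True
  | _, _, .cons _ _ _ e _ p => p.indFrom L T e.headSnd

end Walk

/-- `p` is an inducing path with respect to `Z` and `L`: a path on which
every non-collider other than the endpoints is in `L` and every collider is
an ancestor of the endpoints or of `Z`. -/
def IsInducing (G : MixedGraph V) (Z L : Set V) {a b : V} (p : G.Walk a b) : Prop :=
  p.IsPath ∧ p.indBody L ({a, b} ∪ Z)

/-- Adjacency in the MAG `G[∅_L`: `u, v ∉ L` are adjacent iff they cannot be
d-separated in `G` by any set `W ⊆ V∖L` (not containing `u, v`). -/
def magAdj (G : MixedGraph V) (L : Set V) (u v : V) : Prop :=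
  u ∉ L ∧ v ∉ L ∧ u ≠ v ∧
  ∀ W : Set V, Disjoint W L → u ∉ W → v ∉ W → (G.MConn W u v ∧ G.MConn W v u)

/-- The MAG `G[∅_L` obtained from the DAG `G` by marginalizing `L`: adjacent
`u, v` are joined by `u → v` if `u` is an ancestor of `v` in `G` and `v` is
not an ancestor of `u`, and by `u ↔ v` if neither is an ancestor of the
other. -/
def mag (G : MixedGraph V) (L : Set V) : MixedGraph V where
  dir u v := G.magAdj L u v ∧ G.Anc u v ∧ ¬ G.Anc v u
  bi u v := G.magAdj L u v ∧ ¬ G.Anc u v ∧ ¬ G.Anc v u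
  undir _ _ := False
  bi_symm := fun u v h =>
    ⟨⟨h.1.2.1, h.1.1, h.1.2.2.1.symm,
      fun W hW hv hu => ⟨(h.1.2.2.2 W hW hu hv).2, (h.1.2.2.2 W hW hu hv).1⟩⟩,
      h.2.2, h.2.1⟩
  undir_symm := fun _ _ h => h.elim

/-- An inducing `Z`-trail in the MAG `G[∅_L`: a path whose interior nodes are
exactly the `Z`-nodes on it, each consecutive pair being linked in `G` by an
inducing path w.r.t. `∅, L` which has arrowheads at the interior nodes. -/
def IsInducingZTrail (G : MixedGraph V) (Z L : Set V) {a b : V}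
    (p : (G.mag L).Walk a b) : Prop :=
  p.IsPath ∧ a ∉ Z ∧ b ∉ Z ∧
  (∀ v ∈ p.support, v ≠ a → v ≠ b → v ∈ Z) ∧
  p.edgeProp (fun u v => ∃ q : G.Walk u v, G.IsInducing ∅ L q ∧
    (u ∈ Z → q.headAtStart) ∧ (v ∈ Z → q.headAtEnd))

end MixedGraph

open MixedGraph

variable {V : Type u}


open Relation

section pbdAux

private def Zs (H : MixedGraph V) (A B : V) : Set V :=
  {v | v ≠ A ∧ v ≠ B ∧ (ReflTransGen H.dir v A ∨ ReflTransGen H.dir v B)}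

private def AnZ (H : MixedGraph V) (A B : V) : Set V :=
  {v | ∃ t, (t = A ∨ t ∈ Zs H A B) ∧ ReflTransGen H.dir v t}

private lemma rt_ne_tg {r : V → V → Prop} {a b : V}
    (h : ReflTransGen r a b) (hne : a ≠ b) : TransGen r a b := by
  rcases h.cases_head with rfl | ⟨c, hac, hcb⟩
  · exact absurd rfl hne
  · exact TransGen.head' hac hcb

variable {G H : MixedGraph V} {A B : V}

private lemma noCyc (hMAG : G.IsMAG) {p q : V} (h : G.dir p q)
    (hr : ReflTransGen G.dir q p) : False :=
  hMAG.2.1 p (TransGen.head' h hr)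

private lemma Zs_rt (hd : ∀ u v, H.dir u v → G.dir u v) (hdir : G.dir A B)
    {w : V} (hw : w ∈ Zs H A B) : ReflTransGen G.dir w B := by
  rcases hw.2.2 with h | h
  · exact (ReflTransGen.mono hd _ _ h).tail hdir
  · exact ReflTransGen.mono hd _ _ h

private lemma collContra (hMAG : G.IsMAG) (hd : ∀ u v, H.dir u v → G.dir u v)
    (hdir : G.dir A B) {w : V} (hw : w ∈ Zs H A B)
    (he : H.dir B w ∨ G.bi B w) : False := by
  have hrt := Zs_rt hd hdir hw
  rcases he with h | h
  · exact noCyc hMAG (hd _ _ h) hrt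
  · exact hMAG.2.2.1 B w h (rt_ne_tg hrt hw.2.1)

private lemma BAnZContra (hMAG : G.IsMAG) (hd : ∀ u v, H.dir u v → G.dir u v)
    (hdir : G.dir A B) (hB : B ∈ AnZ H A B) : False := by
  obtain ⟨t, ht, hBt⟩ := hB
  have hBtG : ReflTransGen G.dir B t := ReflTransGen.mono hd _ _ hBt
  rcases ht with rfl | htZ
  · exact noCyc hMAG hdir hBtG
  · exact hMAG.2.1 B ((rt_ne_tg hBtG (Ne.symm htZ.2.1)).trans_left (Zs_rt hd hdir htZ))

private lemma AnZ_cases {u : V} (hu : u ∈ AnZ H A B) :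
    u = A ∨ u = B ∨ u ∈ Zs H A B := by
  obtain ⟨t, ht, hut⟩ := hu
  by_cases h1 : u = A
  · exact Or.inl h1
  by_cases h2 : u = B
  · exact Or.inr (Or.inl h2)
  refine Or.inr (Or.inr ⟨h1, h2, ?_⟩)
  rcases ht with rfl | htZ
  · exact Or.inl hut
  · rcases htZ.2.2 with h | h
    · exact Or.inl (hut.trans h)
    · exact Or.inr (hut.trans h)

private lemma noEdgeAB (hun : ∀ u v, ¬ H.undir u v) (hnadj : ¬ H.Adjacent A B) :
    ∀ e, ¬ H.IsEdge e A B := by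
  intro e h
  cases e
  · exact hnadj (Or.inl h)
  · exact hnadj (Or.inr (Or.inl h))
  · exact hnadj (Or.inr (Or.inr (Or.inl h)))
  · exact hun _ _ h

private lemma noEdgeBA (hun : ∀ u v, ¬ H.undir u v) (hnadj : ¬ H.Adjacent A B) :
    ∀ e, ¬ H.IsEdge e B A := by
  intro e h
  cases e
  · exact hnadj (Or.inr (Or.inl h))
  · exact hnadj (Or.inl h)
  · exact hnadj (Or.inr (Or.inr (Or.inl (H.bi_symm _ _ h))))
  · exact hun _ _ h

private lemma chase (hun : ∀ u v, ¬ H.undir u v) (Z : Set V) :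
    ∀ {v b : V} (q : H.Walk v b) (ph : Prop), ph → q.connFrom Z ph →
      ∃ t, (t = b ∨ t ∈ Z) ∧ ReflTransGen H.dir v t := by
  intro v b q
  induction q with
  | nil w => exact fun ph _ _ => ⟨w, Or.inl rfl, ReflTransGen.refl⟩
  | cons u v' w e h p ih =>
    intro ph hph hc
    by_cases hz : u ∈ Z
    · exact ⟨u, Or.inr hz, ReflTransGen.refl⟩
    · have hnf : ¬ e.headFst := fun hf => hz (hc.1.mp ⟨hph, hf⟩)
      cases e with
      | right =>
        obtain ⟨t, ht, hrt⟩ := ih _ trivial hc.2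
        exact ⟨t, ht, hrt.head h⟩
      | left => exact absurd trivial hnf
      | both => exact absurd trivial hnf
      | undirEdge => exact (hun _ _ h).elim

private lemma mainAB (hMAG : G.IsMAG) (hd : ∀ u v, H.dir u v → G.dir u v)
    (hb : ∀ u v, H.bi u v → G.bi u v) (hun : ∀ u v, ¬ H.undir u v)
    (hdir : G.dir A B) (hnadj : ¬ H.Adjacent A B) :
    ∀ {v b : V} (q : H.Walk v b), B = b →
      ∀ (u : V) (e : EType) (h : H.IsEdge e u v) (ph : Prop),
        (Walk.cons u v b e h q).connFrom (Zs H A B) ph →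
        (¬ph → u ∈ AnZ H A B) → False := by
  intro v b q
  induction q with
  | nil w =>
    rintro rfl u e h ph hc hinv
    by_cases hz : u ∈ Zs H A B
    · obtain ⟨hph, hf⟩ := hc.1.mpr hz
      cases e with
      | right => exact False.elim hf
      | left => exact collContra hMAG hd hdir hz (Or.inl h)
      | both => exact collContra hMAG hd hdir hz (Or.inr (G.bi_symm _ _ (hb _ _ h)))
      | undirEdge => exact hun _ _ h
    · have key : u ∈ AnZ H A B ∨ H.dir u B := by
        by_cases hph : ph
        · cases e with
          | right => exact Or.inr h
          | left => exact absurd (hc.1.mp ⟨hph, trivial⟩) hz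
          | both => exact absurd (hc.1.mp ⟨hph, trivial⟩) hz
          | undirEdge => exact (hun _ _ h).elim
        · exact Or.inl (hinv hph)
      by_cases huA : u = A
      · subst huA; exact noEdgeAB hun hnadj e h
      rcases key with hA | hdB
      · rcases AnZ_cases hA with h1 | h1 | h1
        · exact huA h1
        · subst h1; exact BAnZContra hMAG hd hdir hA
        · exact hz h1
      · by_cases huB : u = B
        · subst huB; exact noCyc hMAG (hd _ _ hdB) ReflTransGen.refl
        · exact hz ⟨huA, huB, Or.inr (ReflTransGen.single hdB)⟩
  | cons v v2 w2 e2 h2 q2 ih =>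
    rintro rfl u e h ph hc hinv
    refine ih rfl v e2 h2 e.headSnd hc.2 ?_
    intro hns
    cases e with
    | right => exact absurd trivial hns
    | both => exact absurd trivial hns
    | undirEdge => exact (hun _ _ h).elim
    | left =>
      by_cases hz : u ∈ Zs H A B
      · exact ⟨u, Or.inr hz, ReflTransGen.single h⟩
      · have hnp : ¬ ph := fun hp => hz (hc.1.mp ⟨hp, trivial⟩)
        obtain ⟨t, ht, hut⟩ := hinv hnp
        exact ⟨t, ht, hut.head h⟩

private lemma mainBA (hMAG : G.IsMAG) (hd : ∀ u v, H.dir u v → G.dir u v)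
    (hb : ∀ u v, H.bi u v → G.bi u v) (hun : ∀ u v, ¬ H.undir u v)
    (hdir : G.dir A B) (hnadj : ¬ H.Adjacent A B) (hAB : A ≠ B) :
    ∀ {a b : V} (p : H.Walk a b), B = a → A = b → ¬ p.ConnBy (Zs H A B) := by
  intro a b p
  cases p with
  | nil w =>
    rintro rfl hbA _
    exact hAB hbA
  | cons a' v' b' e0 h0 p' =>
    rintro rfl rfl hc
    cases p' with
    | nil =>
      exact noEdgeBA hun hnadj e0 h0
    | cons v'' w2 b'' e1 h1 p2 =>
      by_cases hz : v' ∈ Zs H A B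
      · obtain ⟨hs, _⟩ := hc.1.mpr hz
        cases e0 with
        | right => exact collContra hMAG hd hdir hz (Or.inl h0)
        | both => exact collContra hMAG hd hdir hz (Or.inr (hb _ _ h0))
        | left => exact False.elim hs
        | undirEdge => exact False.elim hs
      · have key : v' ∈ AnZ H A B ∨ H.dir v' B := by
          by_cases hs : e0.headSnd
          · have hnf : ¬ e1.headFst := fun hf => hz (hc.1.mp ⟨hs, hf⟩)
            cases e1 with
            | right =>
              obtain ⟨t, ht, hrt⟩ := chase hun (Zs H A B) p2 _ trivial hc.2
              exact Or.inl ⟨t, ht, hrt.head h1⟩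
            | left => exact absurd trivial hnf
            | both => exact absurd trivial hnf
            | undirEdge => exact (hun _ _ h1).elim
          · cases e0 with
            | left => exact Or.inr h0
            | right => exact absurd trivial hs
            | both => exact absurd trivial hs
            | undirEdge => exact (hun _ _ h0).elim
        by_cases hvA : v' = A
        · subst hvA; exact noEdgeBA hun hnadj e0 h0
        rcases key with hA | hdB
        · rcases AnZ_cases hA with h1 | h1 | h1
          · exact hvA h1
          · subst h1; exact BAnZContra hMAG hd hdir hA
          · exact hz h1
        · by_cases hvB : v' = B
          · subst hvB; exact noCyc hMAG (hd _ _ hdB) ReflTransGen.refl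
          · exact hz ⟨hvA, hvB, Or.inr (ReflTransGen.single hdB)⟩

private lemma sep_core (hMAG : G.IsMAG) (hd : ∀ u v, H.dir u v → G.dir u v)
    (hb : ∀ u v, H.bi u v → G.bi u v) (hun : ∀ u v, ¬ H.undir u v)
    (hdir : G.dir A B) (hnadj : ¬ H.Adjacent A B) :
    ∃ Z : Set V, A ∉ Z ∧ B ∉ Z ∧ ¬ H.MConn Z A B ∧ ¬ H.MConn Z B A := by
  have hAB : A ≠ B := by
    rintro rfl
    exact hMAG.2.1 A (TransGen.single hdir)
  have mainAB' : ∀ {a b : V} (p : H.Walk a b), A = a → B = b → ¬ p.ConnBy (Zs H A B) := by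
    intro a b p
    cases p with
    | nil w =>
      rintro rfl hBA _
      exact hAB hBA.symm
    | cons a' w b' e0 h0 p' =>
      rintro rfl rfl hc
      cases p' with
      | nil => exact noEdgeAB hun hnadj e0 h0
      | cons w' w2 b'' e1 h1 p2 =>
        refine mainAB hMAG hd hb hun hdir hnadj p2 rfl w e1 h1 e0.headSnd hc ?_
        intro hns
        cases e0 with
        | right => exact absurd trivial hns
        | both => exact absurd trivial hns
        | undirEdge => exact (hun _ _ h0).elim
        | left => exact ⟨A, Or.inl rfl, ReflTransGen.single h0⟩
  refine ⟨Zs H A B, fun h => h.1 rfl, fun h => h.2.1 rfl, ?_, ?_⟩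
  · rintro ⟨p, hc⟩
    exact mainAB' p rfl rfl hc
  · rintro ⟨p, hc⟩
    exact mainBA hMAG hd hb hun hdir hnadj hAB p rfl rfl hc

private lemma adjSymm {u v : V} (h : H.Adjacent u v) : H.Adjacent v u := by
  rcases h with h | h | h | h
  · exact Or.inr (Or.inl h)
  · exact Or.inl h
  · exact Or.inr (Or.inr (Or.inl (H.bi_symm _ _ h)))
  · exact Or.inr (Or.inr (Or.inr (H.undir_symm _ _ h)))

private def liftW (hle : ∀ e u v, H.IsEdge e u v → G.IsEdge e u v) :
    {a b : V} → H.Walk a b → G.Walk a b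
  | _, _, .nil v => .nil v
  | _, _, .cons u v w e h p => .cons u v w e (hle e u v h) (liftW hle p)

private lemma liftW_connFrom (hle : ∀ e u v, H.IsEdge e u v → G.IsEdge e u v)
    (Z : Set V) : ∀ {a b : V} (p : H.Walk a b) (ph : Prop),
      p.connFrom Z ph → (liftW hle p).connFrom Z ph
  | _, _, .nil _, _, _ => trivial
  | _, _, .cons u v w e h p, ph, hc => ⟨hc.1, liftW_connFrom hle Z p _ hc.2⟩

private lemma liftW_connBy (hle : ∀ e u v, H.IsEdge e u v → G.IsEdge e u v)
    (Z : Set V) {a b : V} (p : H.Walk a b)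
    (hc : p.ConnBy Z) : (liftW hle p).ConnBy Z := by
  cases p with
  | nil => trivial
  | cons u v w e h p => exact liftW_connFrom hle Z p _ hc

end pbdAux


theorem statement_13 (G : MixedGraph V) (hMAG : G.IsMAG)
    (X Y : Set V) (hXY : Disjoint X Y) :
    (G.pbd X Y).IsMAG := by
  have hd : ∀ u v, (G.pbd X Y).dir u v → G.dir u v := fun u v h => h.1
  have hb : ∀ u v, (G.pbd X Y).bi u v → G.bi u v := fun u v h => h
  have hun : ∀ u v, ¬ (G.pbd X Y).undir u v := fun u v h => hMAG.1 u v h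
  have hle : ∀ e u v, (G.pbd X Y).IsEdge e u v → G.IsEdge e u v := by
    intro e u v h
    cases e
    · exact h.1
    · exact h.1
    · exact h
    · exact h
  refine ⟨hun, ?_, ?_, ?_⟩
  · intro v hv
    exact hMAG.2.1 v (TransGen.mono hd _ _ hv)
  · intro u v hbv htv
    exact hMAG.2.2.1 u v (hb _ _ hbv) (TransGen.mono hd _ _ htv)
  · intro u v huv hnadj
    by_cases hadj : G.Adjacent u v
    · rcases hadj with hd1 | hd1 | hb1 | hu1
      · obtain ⟨Z, h1, h2, h3, _⟩ := sep_core hMAG hd hb hun hd1 hnadj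
        exact ⟨Z, h1, h2, h3⟩
      · obtain ⟨Z, h1, h2, _, h4⟩ := sep_core hMAG hd hb hun hd1 (fun h => hnadj (adjSymm h))
        exact ⟨Z, h2, h1, h4⟩
      · exact absurd (Or.inr (Or.inr (Or.inl hb1))) hnadj
      · exact (hMAG.1 u v hu1).elim
    · obtain ⟨Z, h1, h2, h3⟩ := hMAG.2.2.2 u v huv hadj
      exact ⟨Z, h1, h2, fun hm => h3 (by
        obtain ⟨p, hc⟩ := hm
        exact ⟨liftW hle p, liftW_connBy hle Z p hc⟩)⟩
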